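/- Let H be a Hilbert space, A a compact self-adjoint operator on H whose largest eigenvalue μ₁ is simple (i.e., μ₁ > μ₂), with unit eigenvector v₁. There exists a constant c > 0 (depending only on the spectral gap μ₁ − μ₂) such that for every compact self-adjoint B sufficiently close to A in operator norm, any unit eigenvector w of B corresponding to its largest eigenvalue satisfies min(‖w − v₁‖, ‖w + v₁‖) ≤ c·‖B − A‖. -/
import Mathlib

open scoped RealInnerProductSpace

/-- Generalized Cauchy-Schwarz for an operator nonneg on a sub-collection `p`. -/
lemma gcs_aux {H : Type*} [NormedAddCommGroup H] [InnerProductSpace ℝ H]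
    (P : H →L[ℝ] H) (hsym : ∀ x y : H, ⟪P x, y⟫ = ⟪x, P y⟫)
    (p : H → Prop) (hpsmul : ∀ (t : ℝ) (x), p x → p (x + t • P x))
    (hpos : ∀ x, p x → 0 ≤ ⟪P x, x⟫) :
    ∀ x, p x → ‖P x‖ ^ 2 ≤ ‖P‖ * ⟪P x, x⟫ := by
  intro x px
  set y := P x with hy
  have key : ∀ t : ℝ, 0 ≤ ⟪P y, y⟫ * (t * t) + (2 * ⟪P x, y⟫) * t + ⟪P x, x⟫ := by
    intro t
    have h0 := hpos _ (hpsmul t x px)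
    have hPx : P (x + t • y) = P x + t • P y := by simp [map_add, map_smul]
    have hexp : ⟪P (x + t • y), x + t • y⟫
        = ⟪P x, x⟫ + 2 * ⟪P x, y⟫ * t + ⟪P y, y⟫ * (t * t) := by
      rw [hPx, inner_add_left, inner_add_right, inner_add_right]
      have h1 : ⟪(t : ℝ) • P y, x⟫ = t * ⟪P y, x⟫ := real_inner_smul_left _ _ _
      have h2 : ⟪P x, t • y⟫ = t * ⟪P x, y⟫ := real_inner_smul_right _ _ _
      have h3 : ⟪(t : ℝ) • P y, t • y⟫ = t * (t * ⟪P y, y⟫) := by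
        rw [real_inner_smul_left, real_inner_smul_right]
      have h4 : ⟪P y, x⟫ = ⟪P x, y⟫ := by
        rw [hsym y x, real_inner_comm]
      rw [h1, h2, h3, h4]; ring
    rw [hexp] at h0; linarith
  have hdisc := discrim_le_zero key
  rw [discrim] at hdisc
  have hCS : ⟪P x, y⟫ ^ 2 ≤ ⟪P y, y⟫ * ⟪P x, x⟫ := by nlinarith
  have hyy : ⟪P x, y⟫ = ‖y‖ ^ 2 := by rw [hy, real_inner_self_eq_norm_sq]
  have hPyy : ⟪P y, y⟫ ≤ ‖P‖ * ‖y‖ ^ 2 := by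
    calc ⟪P y, y⟫ ≤ ‖P y‖ * ‖y‖ := real_inner_le_norm _ _
    _ ≤ (‖P‖ * ‖y‖) * ‖y‖ := by
        have := P.le_opNorm y
        have := norm_nonneg y
        nlinarith [norm_nonneg (P y)]
    _ = ‖P‖ * ‖y‖ ^ 2 := by ring
  have hxx : 0 ≤ ⟪P x, x⟫ := hpos x px
  show ‖y‖ ^ 2 ≤ ‖P‖ * ⟪P x, x⟫
  rcases eq_or_lt_of_le (norm_nonneg y) with h0 | h0
  · rw [← h0]
    simpa using mul_nonneg (norm_nonneg P) hxx
  · have h1 : (‖y‖ ^ 2) ^ 2 ≤ (‖P‖ * ⟪P x, x⟫) * ‖y‖ ^ 2 := by nlinarith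
    have h2 : (0:ℝ) < ‖y‖ ^ 2 := by positivity
    nlinarith [h1, h2]
open Filter Topology

/-- Attainment of the supremum of the Rayleigh quotient of a compact symmetric operator
on an invariant subspace (described by orthogonality to a set `Z`), when the sup is nonzero. -/
lemma attain_aux {H : Type*} [NormedAddCommGroup H] [InnerProductSpace ℝ H]
    (T : H →L[ℝ] H) (hsym : ∀ x y : H, ⟪T x, y⟫ = ⟪x, T y⟫)
    (hTc : IsCompactOperator T) (Z : Set H)
    (hinv : ∀ u : H, (∀ z ∈ Z, ⟪z, u⟫ = 0) → ∀ z ∈ Z, ⟪z, T u⟫ = 0)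
    (s : ℝ) (hs : s ≠ 0)
    (hbound : ∀ u : H, (∀ z ∈ Z, ⟪z, u⟫ = 0) → ⟪T u, u⟫ ≤ s * ‖u‖ ^ 2)
    (happrox : ∀ n : ℕ, ∃ u : H, (∀ z ∈ Z, ⟪z, u⟫ = 0) ∧ ‖u‖ = 1 ∧
      s - 1 / (n + 1) < ⟪T u, u⟫) :
    ∃ u : H, (∀ z ∈ Z, ⟪z, u⟫ = 0) ∧ ‖u‖ = 1 ∧ T u = s • u := by
  choose u hu hun huT using happrox
  set P : H →L[ℝ] H := s • (1 : H →L[ℝ] H) - T with hP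
  have hPapp : ∀ x : H, P x = s • x - T x := by
    intro x; simp [hP, ContinuousLinearMap.sub_apply, ContinuousLinearMap.smul_apply]
  have hPsym : ∀ x y : H, ⟪P x, y⟫ = ⟪x, P y⟫ := by
    intro x y
    rw [hPapp, hPapp, inner_sub_left, inner_sub_right, hsym,
      real_inner_smul_left, real_inner_smul_right]
  have hmemP : ∀ x : H, (∀ z ∈ Z, ⟪z, x⟫ = 0) → ∀ t : ℝ, ∀ z ∈ Z, ⟪z, x + t • P x⟫ = 0 := by
    intro x hx t z hz
    have h1 : ⟪z, P x⟫ = 0 := by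
      rw [hPapp, inner_sub_right, real_inner_smul_right, hx z hz, hinv x hx z hz]; ring
    rw [inner_add_right, real_inner_smul_right, hx z hz, h1]; ring
  have hPpos : ∀ x : H, (∀ z ∈ Z, ⟪z, x⟫ = 0) → 0 ≤ ⟪P x, x⟫ := by
    intro x hx
    rw [hPapp, inner_sub_left, real_inner_smul_left, real_inner_self_eq_norm_sq]
    linarith [hbound x hx]
  have hgcs := gcs_aux P hPsym (fun x => ∀ z ∈ Z, ⟪z, x⟫ = 0)
    (fun t x hx => hmemP x hx t) hPpos
  -- ‖P (u n)‖ → 0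
  have hPu : ∀ n : ℕ, ‖P (u n)‖ ^ 2 ≤ ‖P‖ * (1 / (n + 1)) := by
    intro n
    have h1 : ⟪P (u n), u n⟫ ≤ 1 / (n + 1) := by
      rw [hPapp, inner_sub_left, real_inner_smul_left, real_inner_self_eq_norm_sq, hun n]
      have := huT n; linarith
    have h2 := hgcs (u n) (hu n)
    have h3 : (0:ℝ) ≤ ⟪P (u n), u n⟫ := hPpos (u n) (hu n)
    nlinarith [norm_nonneg P]
  have htend0 : Tendsto (fun n : ℕ => P (u n)) atTop (𝓝 0) := by
    rw [tendsto_zero_iff_norm_tendsto_zero]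
    have hb : Tendsto (fun n : ℕ => Real.sqrt (‖P‖ * (1 / (n + 1)))) atTop (𝓝 0) := by
      have h1 : Tendsto (fun n : ℕ => ‖P‖ * (1 / (n + 1) : ℝ)) atTop (𝓝 0) := by
        simpa using tendsto_one_div_add_atTop_nhds_zero_nat.const_mul ‖P‖
      simpa using h1.sqrt
    apply squeeze_zero (fun n => norm_nonneg _) _ hb
    intro n
    rw [← Real.sqrt_sq (norm_nonneg (P (u n)))]
    exact Real.sqrt_le_sqrt (hPu n)
  -- extract convergent subsequence of T (u n)
  obtain ⟨Kc, hKc, hKim⟩ := hTc.image_subset_compact_of_bounded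
    (Metric.isBounded_closedBall (x := (0:H)) (r := 1))
  have hmem : ∀ n : ℕ, T (u n) ∈ Kc := by
    intro n
    exact hKim ⟨u n, by simp [Metric.mem_closedBall, Metric.closedBall, hun n], rfl⟩
  obtain ⟨y, _, φ, hφ, hyt⟩ := hKc.tendsto_subseq hmem
  -- u (φ n) converges to s⁻¹ • y
  have hid : ∀ n : ℕ, u (φ n) = s⁻¹ • (P (u (φ n)) + T (u (φ n))) := by
    intro n
    rw [hPapp, sub_add_cancel, smul_smul, inv_mul_cancel₀ hs, one_smul]
  have hconv : Tendsto (fun n : ℕ => u (φ n)) atTop (𝓝 (s⁻¹ • y)) := by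
    have h1 : Tendsto (fun n : ℕ => P (u (φ n)) + T (u (φ n))) atTop (𝓝 (0 + y)) :=
      (htend0.comp hφ.tendsto_atTop).add hyt
    rw [zero_add] at h1
    have h2 := h1.const_smul (s⁻¹)
    exact h2.congr (fun n => (hid n).symm)
  set v := s⁻¹ • y with hv
  have hvZ : ∀ z ∈ Z, ⟪z, v⟫ = 0 := by
    intro z hz
    have h1 : Tendsto (fun n : ℕ => ⟪z, u (φ n)⟫) atTop (𝓝 ⟪z, v⟫) :=
      (tendsto_const_nhds : Tendsto (fun _ : ℕ => z) atTop (𝓝 z)).inner hconv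
    have h2 : Tendsto (fun n : ℕ => ⟪z, u (φ n)⟫) atTop (𝓝 0) := by
      simpa [fun n => hu (φ n) z hz] using
        (tendsto_const_nhds : Tendsto (fun _ : ℕ => (0:ℝ)) atTop (𝓝 0))
    exact tendsto_nhds_unique h1 h2
  have hvn : ‖v‖ = 1 := by
    have h1 : Tendsto (fun n : ℕ => ‖u (φ n)‖) atTop (𝓝 ‖v‖) := hconv.norm
    have h2 : Tendsto (fun n : ℕ => ‖u (φ n)‖) atTop (𝓝 1) := by
      simpa [fun n => hun (φ n)] using
        (tendsto_const_nhds : Tendsto (fun _ : ℕ => (1:ℝ)) atTop (𝓝 1))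
    exact tendsto_nhds_unique h1 h2
  have hvT : T v = s • v := by
    have h1 : Tendsto (fun n : ℕ => T (u (φ n))) atTop (𝓝 (T v)) :=
      (T.continuous.tendsto v).comp hconv
    have h2 : T v = y := tendsto_nhds_unique h1 hyt
    rw [h2, hv, smul_smul, mul_inv_cancel₀ hs, one_smul]
  exact ⟨v, hvZ, hvn, hvT⟩

/-- The spectral gap on the orthogonal complement of `v₁`. -/
lemma gap_aux {H : Type*} [NormedAddCommGroup H] [InnerProductSpace ℝ H] [CompleteSpace H]
    (A : H →L[ℝ] H) (hA : IsSelfAdjoint A) (hAc : IsCompactOperator A)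
    (μ₁ μ₂ : ℝ) (hgap : μ₂ < μ₁) (v₁ : H) (hv₁ : ‖v₁‖ = 1)
    (heig : A v₁ = μ₁ • v₁)
    (hmax : ∀ x : H, ‖x‖ = 1 → ⟪A x, x⟫ ≤ μ₁)
    (hsimple : ∀ (μ : ℝ) (w : H), w ≠ 0 → A w = μ • w → ⟪w, v₁⟫ = 0 → μ ≤ μ₂) :
    ∃ g > 0, ∀ u : H, ⟪u, v₁⟫ = 0 → ⟪A u, u⟫ ≤ (μ₁ - g) * ‖u‖ ^ 2 := by
  have hsym : ∀ x y : H, ⟪A x, y⟫ = ⟪x, A y⟫ := fun x y =>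
    (ContinuousLinearMap.isSelfAdjoint_iff_isSymmetric.mp hA) x y
  have hAform : ∀ x : H, ⟪A x, x⟫ ≤ μ₁ * ‖x‖ ^ 2 := by
    intro x
    rcases eq_or_ne x 0 with rfl | hx
    · simp
    · have hn : (0:ℝ) < ‖x‖ := norm_pos_iff.mpr hx
      have hne : ‖x‖ ≠ 0 := hn.ne'
      have h1 := hmax (‖x‖⁻¹ • x) (by rw [norm_smul, norm_inv, norm_norm]; field_simp)
      rw [map_smul, real_inner_smul_left, real_inner_smul_right] at h1
      have h2 : ⟪A x, x⟫ = ‖x‖ ^ 2 * (‖x‖⁻¹ * (‖x‖⁻¹ * ⟪A x, x⟫)) := by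
        field_simp
      rw [h2]
      calc ‖x‖ ^ 2 * (‖x‖⁻¹ * (‖x‖⁻¹ * ⟪A x, x⟫)) ≤ ‖x‖ ^ 2 * μ₁ :=
            mul_le_mul_of_nonneg_left h1 (sq_nonneg _)
      _ = μ₁ * ‖x‖ ^ 2 := mul_comm _ _
  rcases eq_or_ne μ₁ 0 with hμ₁ | hμ₁
  · -- μ₁ = 0 : take g = -μ₂
    subst hμ₁
    set T : H →L[ℝ] H := -A with hT
    have hTapp : ∀ x : H, T x = -(A x) := fun x => rfl
    have hsymT : ∀ x y : H, ⟪T x, y⟫ = ⟪x, T y⟫ := by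
      intro x y; rw [hTapp, hTapp, inner_neg_left, inner_neg_right, hsym]
    have hTc : IsCompactOperator (⇑T) := by
      have := hAc.neg
      have hco : ⇑T = -⇑A := by funext x; simp [hTapp]
      rwa [hco]
    have hTpos : ∀ x : H, 0 ≤ ⟪T x, x⟫ := by
      intro x
      rw [hTapp, inner_neg_left]
      have := hAform x
      simp only [zero_mul] at this
      linarith
    refine ⟨-μ₂, by linarith, ?_⟩
    by_contra hcon
    push_neg at hcon
    obtain ⟨u₀, hu₀v, hu₀⟩ := hcon
    rw [zero_sub, neg_neg] at hu₀
    -- families of orthonormal eigenvectors of every size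
    have hfam : ∀ n : ℕ, ∃ w : Fin n → H, Orthonormal ℝ w ∧ (∀ i, ⟪v₁, w i⟫ = 0) ∧
        (∀ i, ∃ l : ℝ, l ≤ μ₂ ∧ A (w i) = l • w i) := by
      intro n
      induction n with
      | zero => exact ⟨Fin.elim0, ⟨fun i => i.elim0, fun i => i.elim0⟩,
          fun i => i.elim0, fun i => i.elim0⟩
      | succ n ih =>
        obtain ⟨w, hON, hWv, hWeig⟩ := ih
        choose l hlle hleig using hWeig
        set Z : Set H := insert v₁ (Set.range w) with hZ
        have hZiff : ∀ u : H, (∀ z ∈ Z, ⟪z, u⟫ = 0) ↔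
            (⟪v₁, u⟫ = 0 ∧ ∀ i, ⟪w i, u⟫ = 0) := by
          intro u
          constructor
          · intro h
            exact ⟨h v₁ (Set.mem_insert _ _),
              fun i => h (w i) (Set.mem_insert_of_mem _ ⟨i, rfl⟩)⟩
          · rintro ⟨h1, h2⟩ z hz
            rcases Set.mem_insert_iff.mp hz with rfl | ⟨i, rfl⟩
            · exact h1
            · exact h2 i
        have hinvZ : ∀ u : H, (∀ z ∈ Z, ⟪z, u⟫ = 0) → ∀ z ∈ Z, ⟪z, T u⟫ = 0 := by
          intro u hu z hz
          have hAz : ⟪z, A u⟫ = 0 := by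
            rcases Set.mem_insert_iff.mp hz with rfl | ⟨i, rfl⟩
            · rw [← hsym, heig]; simp
            · rw [← hsym, hleig i, real_inner_smul_left, ((hZiff u).mp hu).2 i, mul_zero]
          rw [hTapp, inner_neg_right, hAz, neg_zero]
        by_cases hK : ∃ u' : H, (∀ z ∈ Z, ⟪z, u'⟫ = 0) ∧ u' ≠ 0
        · -- extract a new eigenvector
          obtain ⟨u', hu'Z, hu'ne⟩ := hK
          have hu'n : (0:ℝ) < ‖u'‖ := norm_pos_iff.mpr hu'ne
          have hu'ne0 : ‖u'‖ ≠ 0 := hu'n.ne'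
          set uh := ‖u'‖⁻¹ • u' with huh
          have huhZ : ∀ z ∈ Z, ⟪z, uh⟫ = 0 := fun z hz => by
            rw [huh, real_inner_smul_right, hu'Z z hz, mul_zero]
          have huhn : ‖uh‖ = 1 := by
            rw [huh, norm_smul, norm_inv, norm_norm]; field_simp
          have huhne : uh ≠ 0 := by
            intro h; rw [h, norm_zero] at huhn; exact one_ne_zero huhn.symm
          set SS : Set ℝ :=
            {r : ℝ | ∃ x : H, (∀ z ∈ Z, ⟪z, x⟫ = 0) ∧ ‖x‖ = 1 ∧ r = ⟪T x, x⟫} with hSS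
          have hne : SS.Nonempty := ⟨⟪T uh, uh⟫, uh, huhZ, huhn, rfl⟩
          have hbdd : BddAbove SS := by
            refine ⟨‖T‖, ?_⟩
            rintro r ⟨x, hxZ, hxn, rfl⟩
            calc ⟪T x, x⟫ ≤ ‖T x‖ * ‖x‖ := real_inner_le_norm _ _
            _ ≤ (‖T‖ * ‖x‖) * ‖x‖ :=
                mul_le_mul_of_nonneg_right (T.le_opNorm x) (norm_nonneg _)
            _ = ‖T‖ := by rw [hxn]; ring
          set σ := sSup SS with hσdef
          have huhmem : ⟪T uh, uh⟫ ∈ SS := ⟨uh, huhZ, huhn, rfl⟩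
          have hσ0 : 0 ≤ σ := le_trans (hTpos uh) (le_csSup hbdd huhmem)
          rcases eq_or_lt_of_le hσ0 with hσ | hσ
          · -- sup is zero: T vanishes on the subspace, eigenvalue 0, contradiction
            exfalso
            have h1 : ⟪T uh, uh⟫ ≤ 0 := by rw [hσ]; exact le_csSup hbdd huhmem
            have h2 : ⟪T uh, uh⟫ = 0 := le_antisymm h1 (hTpos uh)
            have h3 := gcs_aux T hsymT (fun _ => True) (fun _ _ _ => trivial)
              (fun x _ => hTpos x) uh trivial
            rw [h2, mul_zero] at h3
            have h4 : T uh = 0 := by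
              have h5 : ‖T uh‖ = 0 := by nlinarith [norm_nonneg (T uh), sq_nonneg ‖T uh‖]
              exact norm_eq_zero.mp h5
            have h6 : A uh = (0:ℝ) • uh := by
              have h5 : -(A uh) = 0 := h4
              rw [zero_smul]
              exact neg_eq_zero.mp h5
            have h7 := hsimple 0 uh huhne h6
              (by rw [real_inner_comm]; exact ((hZiff uh).mp huhZ).1)
            linarith
          · -- sup is positive: attain it
            have hbound : ∀ u : H, (∀ z ∈ Z, ⟪z, u⟫ = 0) → ⟪T u, u⟫ ≤ σ * ‖u‖ ^ 2 := by
              intro u huZ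
              rcases eq_or_ne u 0 with rfl | hune
              · simp
              · have hun : (0:ℝ) < ‖u‖ := norm_pos_iff.mpr hune
                have hune0 : ‖u‖ ≠ 0 := hun.ne'
                have hmem : ⟪T (‖u‖⁻¹ • u), ‖u‖⁻¹ • u⟫ ∈ SS := by
                  refine ⟨‖u‖⁻¹ • u, fun z hz => ?_, ?_, rfl⟩
                  · rw [real_inner_smul_right, huZ z hz, mul_zero]
                  · rw [norm_smul, norm_inv, norm_norm]; field_simp
                have hle := le_csSup hbdd hmem
                rw [map_smul, real_inner_smul_left, real_inner_smul_right] at hle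
                have heq : ⟪T u, u⟫ = ‖u‖ ^ 2 * (‖u‖⁻¹ * (‖u‖⁻¹ * ⟪T u, u⟫)) := by
                  field_simp
                rw [heq]
                calc ‖u‖ ^ 2 * (‖u‖⁻¹ * (‖u‖⁻¹ * ⟪T u, u⟫)) ≤ ‖u‖ ^ 2 * σ :=
                      mul_le_mul_of_nonneg_left hle (sq_nonneg _)
                _ = σ * ‖u‖ ^ 2 := mul_comm _ _
            have happrox : ∀ n : ℕ, ∃ u : H, (∀ z ∈ Z, ⟪z, u⟫ = 0) ∧ ‖u‖ = 1 ∧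
                σ - 1 / (n + 1) < ⟪T u, u⟫ := by
              intro m
              have hlt : σ - 1 / (m + 1) < σ := by
                have : (0:ℝ) < 1 / (m + 1) := by positivity
                linarith
              obtain ⟨r, hrSS, hrlt⟩ := exists_lt_of_lt_csSup hne hlt
              obtain ⟨x, hxZ, hxn, rfl⟩ := hrSS
              exact ⟨x, hxZ, hxn, hrlt⟩
            obtain ⟨w', hw'Z, hw'n, hw'T⟩ :=
              attain_aux T hsymT hTc Z hinvZ σ (ne_of_gt hσ) hbound happrox
            have hw'A : A w' = (-σ) • w' := by
              have h1 : -(A w') = σ • w' := hw'T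
              rw [neg_smul, ← h1, neg_neg]
            have hw'ne : w' ≠ 0 := by
              intro h; rw [h, norm_zero] at hw'n; exact one_ne_zero hw'n.symm
            have hσμ₂ : -σ ≤ μ₂ := hsimple (-σ) w' hw'ne hw'A
              (by rw [real_inner_comm]; exact ((hZiff w').mp hw'Z).1)
            have hw'v₁ : ⟪v₁, w'⟫ = 0 := ((hZiff w').mp hw'Z).1
            have hw'w : ∀ i, ⟪w i, w'⟫ = 0 := ((hZiff w').mp hw'Z).2
            refine ⟨Fin.cons w' w, ?_, ?_, ?_⟩
            · rw [orthonormal_iff_ite]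
              intro i j
              refine Fin.cases ?_ (fun i' => ?_) i <;> refine Fin.cases ?_ (fun j' => ?_) j
              · simp only [Fin.cons_zero, if_pos rfl]
                rw [real_inner_self_eq_norm_sq, hw'n]; norm_num
              · simp only [Fin.cons_zero, Fin.cons_succ,
                  (Fin.succ_ne_zero j').symm, if_false]
                rw [real_inner_comm]; exact hw'w j'
              · simp only [Fin.cons_zero, Fin.cons_succ, Fin.succ_ne_zero i', if_false]
                exact hw'w i'
              · simp only [Fin.cons_succ, Fin.succ_inj]
                have := orthonormal_iff_ite.mp hON i' j'
                simpa using this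
            · intro i
              refine Fin.cases ?_ (fun i' => ?_) i
              · simpa [Fin.cons_zero] using hw'v₁
              · simpa [Fin.cons_succ] using hWv i'
            · intro i
              refine Fin.cases ?_ (fun i' => ?_) i
              · exact ⟨-σ, hσμ₂, by simpa [Fin.cons_zero] using hw'A⟩
              · exact ⟨l i', hlle i', by simpa [Fin.cons_succ] using hleig i'⟩
        · -- the perp of the family inside v₁-perp is trivial : contradiction with u₀
          push_neg at hK
          set a : Fin n → ℝ := fun i => ⟪w i, u₀⟫ with ha
          set r : H := u₀ - ∑ i, a i • w i with hr
          have hrZ : ∀ z ∈ Z, ⟪z, r⟫ = 0 := by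
            intro z hz
            rcases Set.mem_insert_iff.mp hz with hz1 | ⟨i, rfl⟩
            · have hv1u0 : ⟪v₁, u₀⟫ = 0 := by rw [real_inner_comm]; exact hu₀v
              rw [hz1, hr, inner_sub_right, hv1u0, inner_sum]
              simp only [real_inner_smul_right]
              rw [Finset.sum_congr rfl fun i _ => by rw [hWv i, mul_zero]]
              simp
            · rw [hr, inner_sub_right, hON.inner_right_fintype a i]
              simp [ha]
          have hr0 : r = 0 := hK r hrZ
          have hu₀eq : u₀ = ∑ i, a i • w i := by
            have := sub_eq_zero.mp hr0; exact this
          exfalso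
          have hAu₀ : A u₀ = ∑ i, (a i * l i) • w i := by
            rw [hu₀eq, map_sum]
            refine Finset.sum_congr rfl fun i _ => ?_
            rw [map_smul, hleig i, smul_smul]
          have hform : ⟪A u₀, u₀⟫ = ∑ i, (a i * l i) * a i := by
            rw [hAu₀]
            nth_rewrite 1 [hu₀eq]
            have := hON.inner_sum (fun i => a i * l i) a Finset.univ
            simpa using this
          have hnorm : ‖u₀‖ ^ 2 = ∑ i, a i * a i := by
            rw [← real_inner_self_eq_norm_sq]
            nth_rewrite 1 [hu₀eq]
            nth_rewrite 1 [hu₀eq]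
            have := hON.inner_sum a a Finset.univ
            simpa using this
          have hle : ⟪A u₀, u₀⟫ ≤ μ₂ * ‖u₀‖ ^ 2 := by
            rw [hform, hnorm, Finset.mul_sum]
            refine Finset.sum_le_sum fun i _ => ?_
            have h1 : (a i * l i) * a i = l i * (a i * a i) := by ring
            rw [h1]
            exact mul_le_mul_of_nonneg_right (hlle i) (mul_self_nonneg _)
          linarith
    -- pigeonhole: too many orthonormal eigenvectors contradicts compactness
    obtain ⟨Kc, hKc, hKim⟩ := hAc.image_subset_compact_of_bounded
      (Metric.isBounded_closedBall (x := (0:H)) (r := 1))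
    obtain ⟨t, _, htfin, htcov⟩ := hKc.finite_cover_balls (e := -μ₂ / 2) (by linarith)
    classical
    obtain ⟨w, hON, hWv, hWeig⟩ := hfam (htfin.toFinset.card + 1)
    choose l hlle hleig using hWeig
    have himg : ∀ i, A (w i) ∈ Kc := by
      intro i
      exact hKim ⟨w i, by rw [Metric.mem_closedBall, dist_zero_right, hON.1 i], rfl⟩
    have hcenter : ∀ i, ∃ c, c ∈ htfin.toFinset ∧ A (w i) ∈ Metric.ball c (-μ₂ / 2) := by
      intro i
      have := htcov (himg i)
      rw [Set.mem_iUnion₂] at this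
      obtain ⟨c, hc1, hc2⟩ := this
      exact ⟨c, htfin.mem_toFinset.mpr hc1, hc2⟩
    choose cfun hcmem hcball using hcenter
    obtain ⟨i, j, hij, hc⟩ := Fintype.exists_ne_map_eq_of_card_lt
      (fun i : Fin (htfin.toFinset.card + 1) =>
        (⟨cfun i, hcmem i⟩ : {x // x ∈ htfin.toFinset}))
      (by rw [Fintype.card_coe, Fintype.card_fin]; omega)
    have hceq : cfun i = cfun j := by
      simpa [Subtype.mk.injEq] using hc
    have hdistlt : dist (A (w i)) (A (w j)) < -μ₂ := by
      calc dist (A (w i)) (A (w j)) ≤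
            dist (A (w i)) (cfun i) + dist (cfun i) (A (w j)) := dist_triangle _ _ _
      _ < -μ₂ / 2 + -μ₂ / 2 := by
          have h1 : dist (A (w i)) (cfun i) < -μ₂ / 2 := Metric.mem_ball.mp (hcball i)
          have h2 : dist (cfun i) (A (w j)) < -μ₂ / 2 := by
            rw [hceq, dist_comm]; exact Metric.mem_ball.mp (hcball j)
          linarith
      _ = -μ₂ := by ring
    have hdistsq : dist (A (w i)) (A (w j)) ^ 2 = l i ^ 2 + l j ^ 2 := by
      rw [dist_eq_norm, hleig i, hleig j, norm_sub_sq_real]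
      rw [real_inner_smul_left, real_inner_smul_right, hON.2 hij]
      rw [norm_smul, norm_smul, hON.1 i, hON.1 j]
      simp [mul_pow, sq_abs]
    have hli : μ₂ ^ 2 ≤ l i ^ 2 := by nlinarith [hlle i, hgap]
    have hlj : μ₂ ^ 2 ≤ l j ^ 2 := by nlinarith [hlle j, hgap]
    have hd0 : 0 ≤ dist (A (w i)) (A (w j)) := dist_nonneg
    nlinarith [hdistlt, hdistsq, hli, hlj, hgap]
  · -- μ₁ ≠ 0 : direct argument
    by_contra hcon
    push_neg at hcon
    have happrox : ∀ n : ℕ, ∃ u : H, (∀ z ∈ ({v₁} : Set H), ⟪z, u⟫ = 0) ∧ ‖u‖ = 1 ∧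
        μ₁ - 1 / (n + 1) < ⟪A u, u⟫ := by
      intro n
      have hpos : (0:ℝ) < 1 / (n + 1) := by positivity
      obtain ⟨u', hu'v, hu'⟩ := hcon (1 / (n + 1)) hpos
      have hu'ne : u' ≠ 0 := by
        rintro rfl
        simp at hu'
      have hc : (0:ℝ) < ‖u'‖ := norm_pos_iff.mpr hu'ne
      have hcne : ‖u'‖ ≠ 0 := hc.ne'
      refine ⟨‖u'‖⁻¹ • u', ?_, ?_, ?_⟩
      · intro z hz
        rw [Set.mem_singleton_iff] at hz
        rw [hz, real_inner_smul_right, real_inner_comm, hu'v, mul_zero]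
      · rw [norm_smul, norm_inv, norm_norm]; exact inv_mul_cancel₀ hcne
      · rw [map_smul, real_inner_smul_left, real_inner_smul_right]
        have h2 : ‖u'‖⁻¹ * (‖u'‖⁻¹ * ⟪A u', u'⟫) = ⟪A u', u'⟫ / ‖u'‖ ^ 2 := by
          rw [pow_two, div_eq_mul_inv, mul_inv]; ring
        rw [h2, lt_div_iff₀ (by positivity : (0:ℝ) < ‖u'‖ ^ 2)]
        linarith
    have hinv : ∀ u : H, (∀ z ∈ ({v₁} : Set H), ⟪z, u⟫ = 0) →
        ∀ z ∈ ({v₁} : Set H), ⟪z, A u⟫ = 0 := by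
      intro u hu z hz
      rw [Set.mem_singleton_iff] at hz
      rw [hz, ← hsym, heig, real_inner_smul_left, hu v₁ (Set.mem_singleton _), mul_zero]
    have hbound : ∀ u : H, (∀ z ∈ ({v₁} : Set H), ⟪z, u⟫ = 0) → ⟪A u, u⟫ ≤ μ₁ * ‖u‖ ^ 2 :=
      fun u _ => hAform u
    obtain ⟨v, hvZ, hvn, hvA⟩ := attain_aux A hsym hAc {v₁} hinv μ₁ hμ₁ hbound happrox
    have hvne : v ≠ 0 := by
      intro h; rw [h, norm_zero] at hvn; exact one_ne_zero hvn.symm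
    have := hsimple μ₁ v hvne hvA
      (by rw [real_inner_comm]; exact hvZ v₁ (Set.mem_singleton _))
    linarith

set_option maxHeartbeats 1000000 in
theorem eigenvector_perturbation
    {H : Type*} [NormedAddCommGroup H] [InnerProductSpace ℝ H] [CompleteSpace H]
    (A : H →L[ℝ] H) (hA : IsSelfAdjoint A) (hAc : IsCompactOperator A)
    (μ₁ μ₂ : ℝ) (hgap : μ₂ < μ₁) (v₁ : H) (hv₁ : ‖v₁‖ = 1)
    (heig : A v₁ = μ₁ • v₁)
    (hmax : ∀ x : H, ‖x‖ = 1 → ⟪A x, x⟫ ≤ μ₁)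
    (hsimple : ∀ (μ : ℝ) (w : H), w ≠ 0 → A w = μ • w → ⟪w, v₁⟫ = 0 → μ ≤ μ₂) :
    ∃ c > 0, ∃ δ > 0, ∀ B : H →L[ℝ] H,
      IsSelfAdjoint B → IsCompactOperator B → ‖B - A‖ < δ →
      ∀ (ν : ℝ) (w : H), ‖w‖ = 1 → B w = ν • w →
        (∀ x : H, ‖x‖ = 1 → ⟪B x, x⟫ ≤ ν) →
        min ‖w - v₁‖ ‖w + v₁‖ ≤ c * ‖B - A‖ := by
  obtain ⟨g, hg, hgapK⟩ := gap_aux A hA hAc μ₁ μ₂ hgap v₁ hv₁ heig hmax hsimple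
  refine ⟨4 / g, by positivity, g / 2, by positivity, ?_⟩
  intro B hB hBc hBA ν w hw heigB hmaxB
  set ε := ‖B - A‖ with hε
  have hε0 : 0 ≤ ε := norm_nonneg _
  set a : ℝ := ⟪w, v₁⟫ with ha
  set u : H := w - a • v₁ with hu
  have h1 : ⟪u, v₁⟫ = 0 := by
    rw [hu, inner_sub_left, real_inner_smul_left, real_inner_self_eq_norm_sq, hv₁]
    simp [ha]
  have h1' : ⟪v₁, u⟫ = 0 := by rw [real_inner_comm]; exact h1
  have hweq : w = a • v₁ + u := by rw [hu]; abel
  have h2 : a ^ 2 + ‖u‖ ^ 2 = 1 := by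
    have h3 : ‖w‖ ^ 2 = ‖a • v₁‖ ^ 2 + 2 * ⟪a • v₁, u⟫ + ‖u‖ ^ 2 := by
      rw [hweq] at hw ⊢
      exact norm_add_sq_real _ _
    rw [hw] at h3
    rw [norm_smul, hv₁, real_inner_smul_left, h1'] at h3
    simp at h3
    have : |a| ^ 2 = a ^ 2 := sq_abs a
    nlinarith
  have ha1 : a ^ 2 ≤ 1 := by nlinarith [sq_nonneg ‖u‖]
  have hu1 : ‖u‖ ≤ 1 := by nlinarith [norm_nonneg u, sq_nonneg a]
  -- ν is close to μ₁
  have hν : μ₁ - ε ≤ ν := by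
    have hB1 := hmaxB v₁ hv₁
    have h3 : ⟪A v₁, v₁⟫ = μ₁ := by
      rw [heig, real_inner_smul_left, real_inner_self_eq_norm_sq, hv₁]; ring
    have h4 : ⟪B v₁, v₁⟫ = μ₁ + ⟪B v₁ - A v₁, v₁⟫ := by
      rw [inner_sub_left]; linarith
    have h5 : |⟪B v₁ - A v₁, v₁⟫| ≤ ε := by
      calc |⟪B v₁ - A v₁, v₁⟫| ≤ ‖B v₁ - A v₁‖ * ‖v₁‖ := abs_real_inner_le_norm _ _
      _ = ‖(B - A) v₁‖ := by rw [hv₁, mul_one, ContinuousLinearMap.sub_apply]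
      _ ≤ ε * ‖v₁‖ := (B - A).le_opNorm v₁
      _ = ε := by rw [hv₁, mul_one]
    have h6 := (abs_le.mp h5).1
    linarith
  -- the key bound on ‖u‖
  have hubd : ‖u‖ ≤ 2 * ε / g := by
    have hformu := hgapK u h1
    have he1 : A u - ν • u = (A w - B w) - (a * (μ₁ - ν)) • v₁ := by
      rw [hu, map_sub, map_smul, heig, heigB]
      module
    have he2 : ⟪A u, u⟫ - ν * ‖u‖ ^ 2 = ⟪A w - B w, u⟫ := by
      have h3 : ⟪A u - ν • u, u⟫ = ⟪A u, u⟫ - ν * ‖u‖ ^ 2 := by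
        rw [inner_sub_left, real_inner_smul_left, real_inner_self_eq_norm_sq]
      rw [← h3, he1, inner_sub_left, real_inner_smul_left, h1', mul_zero, sub_zero]
    have he3 : ⟪B w - A w, u⟫ ≤ ε * ‖u‖ := by
      calc ⟪B w - A w, u⟫ ≤ ‖B w - A w‖ * ‖u‖ := real_inner_le_norm _ _
      _ ≤ ε * ‖u‖ := by
          refine mul_le_mul_of_nonneg_right ?_ (norm_nonneg u)
          calc ‖B w - A w‖ = ‖(B - A) w‖ := by rw [ContinuousLinearMap.sub_apply]
          _ ≤ ε * ‖w‖ := (B - A).le_opNorm w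
          _ = ε := by rw [hw, mul_one]
    have he4 : ⟪B w - A w, u⟫ = ν * ‖u‖ ^ 2 - ⟪A u, u⟫ := by
      rw [inner_sub_left]
      rw [inner_sub_left] at he2
      linarith
    have he5 : (g / 2) * ‖u‖ ^ 2 ≤ ε * ‖u‖ := by
      have h6 : (ν - (μ₁ - g)) * ‖u‖ ^ 2 ≤ ν * ‖u‖ ^ 2 - ⟪A u, u⟫ := by nlinarith
      have h7 : g / 2 ≤ ν - (μ₁ - g) := by linarith [hBA]
      nlinarith [sq_nonneg ‖u‖]
    rcases eq_or_lt_of_le (norm_nonneg u) with h8 | h8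
    · rw [← h8]; positivity
    · rw [le_div_iff₀ hg]
      have h9' : ((g / 2) * ‖u‖) * ‖u‖ ≤ ε * ‖u‖ := by
        have hsq : ((g / 2) * ‖u‖) * ‖u‖ = (g / 2) * ‖u‖ ^ 2 := by ring
        rw [hsq]; exact he5
      have h9 := le_of_mul_le_mul_right h9' h8
      linarith
  -- conclude
  have hmin : min ‖w - v₁‖ ‖w + v₁‖ ≤ 2 * ‖u‖ := by
    rcases le_or_gt 0 a with hA0 | hA0
    · refine le_trans (min_le_left _ _) ?_
      have hs : ‖w - v₁‖ ^ 2 = 2 - 2 * a := by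
        rw [norm_sub_sq_real, hw, hv₁, ← ha]; ring
      have hsle : ‖w - v₁‖ ^ 2 ≤ (2 * ‖u‖) ^ 2 := by
        have hu2 : ‖u‖ ^ 2 = 1 - a ^ 2 := by linarith
        have haa : a ≤ 1 := by nlinarith
        nlinarith
      have := Real.sqrt_le_sqrt hsle
      rwa [Real.sqrt_sq (norm_nonneg _), Real.sqrt_sq (by positivity)] at this
    · refine le_trans (min_le_right _ _) ?_
      have hs : ‖w + v₁‖ ^ 2 = 2 + 2 * a := by
        rw [norm_add_sq_real, hw, hv₁, ← ha]; ring
      have hsle : ‖w + v₁‖ ^ 2 ≤ (2 * ‖u‖) ^ 2 := by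
        have hu2 : ‖u‖ ^ 2 = 1 - a ^ 2 := by linarith
        have haa : -1 ≤ a := by nlinarith
        nlinarith
      have := Real.sqrt_le_sqrt hsle
      rwa [Real.sqrt_sq (norm_nonneg _), Real.sqrt_sq (by positivity)] at this
  calc min ‖w - v₁‖ ‖w + v₁‖ ≤ 2 * ‖u‖ := hmin
  _ ≤ 2 * (2 * ε / g) := by linarith
  _ = 4 / g * ε := by field_simp; ring
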